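/- Let U = ℤ. Let {S_d}_{d ∈ ℕ} be any partition of ℕ into finite sets with |S_1| < |S_2| < ..., let E be the set of negative even integers, let O be the set of negative odd integers, and let C = {E ∪ S_d : d ∈ ℕ} ∪ {O ∪ S_d : d ∈ ℕ}. Then the closure dimension of C is infinite, yet C can be uniformly generated with feedback. -/

import Mathlib

/-!
STATEMENT 17: Let U = ℤ.  Let {S_d}_{d ∈ ℕ} be a partition of ℕ (the nonnegative
integers inside ℤ) into finite sets of strictly increasing sizes, let E be the
negative even integers, O the negative odd integers, and
C = {E ∪ S_d : d} ∪ {O ∪ S_d : d}.  Then the closure dimension of C is infinite,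
yet C can be uniformly generated with feedback.
-/

/-- A generator strategy in the feedback model: `query h x` is the membership query
`y_t` issued after receiving input `x_t` with history `h` of completed rounds, and
`out h x y a` is the output `z_t` after the answer `a_t` to the query. -/
structure FGen (U : Type) where
  query : List (U × U × Bool × U) → U → U
  out : List (U × U × Bool × U) → U → U → Bool → U

/-- An adversary strategy in the feedback model: `inp h` is the next input `x_t`,
and `ans h x y` is the yes/no answer `a_t` to the generator's query `y_t`. -/
structure FAdv (U : Type) where
  inp : List (U × U × Bool × U) → U
  ans : List (U × U × Bool × U) → U → U → Bool

/-- The history of the first `t` completed rounds `(x_s, y_s, a_s, z_s)` of the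
interaction between `Adv` and `Gen`. -/
def fRun {U : Type} (Adv : FAdv U) (Gen : FGen U) : ℕ → List (U × U × Bool × U)
  | 0 => []
  | t + 1 =>
      let h := fRun Adv Gen t
      let x := Adv.inp h
      let y := Gen.query h x
      let a := Adv.ans h x y
      h ++ [(x, y, a, Gen.out h x y a)]

/-- The input `x_t` of round `t` (0-indexed) of the transcript T(Adv, Gen). -/
def fX {U : Type} (Adv : FAdv U) (Gen : FGen U) (t : ℕ) : U :=
  Adv.inp (fRun Adv Gen t)

/-- The generator's query `y_t` of round `t`. -/
def fY {U : Type} (Adv : FAdv U) (Gen : FGen U) (t : ℕ) : U :=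
  Gen.query (fRun Adv Gen t) (fX Adv Gen t)

/-- The adversary's answer `a_t` of round `t`. -/
def fA {U : Type} (Adv : FAdv U) (Gen : FGen U) (t : ℕ) : Bool :=
  Adv.ans (fRun Adv Gen t) (fX Adv Gen t) (fY Adv Gen t)

/-- The generator's output `z_t` of round `t`. -/
def fZ {U : Type} (Adv : FAdv U) (Gen : FGen U) (t : ℕ) : U :=
  Gen.out (fRun Adv Gen t) (fX Adv Gen t) (fY Adv Gen t) (fA Adv Gen t)

/-- `S_r`: the set of distinct inputs among the first `r` rounds. -/
def fS {U : Type} (Adv : FAdv U) (Gen : FGen U) (r : ℕ) : Set U :=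
  fX Adv Gen '' {t | t < r}

/-- The adversary strategy `Adv` is consistent with the language `K` (against `Gen`):
the inputs form an enumeration of `K` and every answer is truthful for `K`. -/
def fConsistent {U : Type} (Adv : FAdv U) (Gen : FGen U) (K : Set U) : Prop :=
  (∀ t, fX Adv Gen t ∈ K) ∧ (∀ w ∈ K, ∃ t, fX Adv Gen t = w) ∧
    ∀ t, fA Adv Gen t = true ↔ fY Adv Gen t ∈ K

/-- `C_r(T)`: the languages of `C` consistent with the transcript up to round `r`
(inputs belong to the language and all answers are truthful for it). -/
def fCons {U : Type} (C : Set (Set U)) (Adv : FAdv U) (Gen : FGen U) (r : ℕ) :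
    Set (Set U) :=
  {Lang ∈ C | ∀ t < r, fX Adv Gen t ∈ Lang ∧ (fA Adv Gen t = true ↔ fY Adv Gen t ∈ Lang)}

/-- The effective intersection `E_r(T)`. -/
def fE {U : Type} (C : Set (Set U)) (Adv : FAdv U) (Gen : FGen U) (r : ℕ) : Set U :=
  ⋂₀ fCons C Adv Gen r \ fS Adv Gen r

/-- The GF dimension of `C`: the supremum of all `d ∈ ℕ` such that for every
generator strategy there are `K ∈ C` and an adversary strategy consistent with `K`
whose transcript has a finite round `r ≥ d` with `|S_r| ≥ d` and `E_r(T) = ∅`. -/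
noncomputable def gfDim {U : Type} (C : Set (Set U)) : ℕ∞ :=
  sSup {e : ℕ∞ | ∃ d : ℕ, e = (d : ℕ∞) ∧
    ∀ Gen : FGen U, ∃ K ∈ C, ∃ Adv : FAdv U,
      fConsistent Adv Gen K ∧
      ∃ r : ℕ, d ≤ r ∧ d ≤ (fS Adv Gen r).ncard ∧ fE C Adv Gen r = ∅}

/-- `C` can be uniformly generated with feedback: some generator strategy `Gen` and
bound `t*` are such that against every adversary consistent with any `K ∈ C`, the
output of every round `t` with `|S_t| ≥ t*` lies in `K \ S_t` (here `S_t` counts the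
inputs up to and including round `t`). -/
def UniformGenWithFeedback {U : Type} (C : Set (Set U)) : Prop :=
  ∃ Gen : FGen U, ∃ tstar : ℕ,
    ∀ K ∈ C, ∀ Adv : FAdv U, fConsistent Adv Gen K →
      ∀ t : ℕ, tstar ≤ (fS Adv Gen (t + 1)).ncard →
        fZ Adv Gen t ∈ K \ fS Adv Gen (t + 1)

/-- The closure dimension of `C`: the supremum of sizes of finite sets `S ⊆ U` such
that the intersection of all languages of `C` containing `S` is finite. -/
noncomputable def closureDim {U : Type} (C : Set (Set U)) : ℕ∞ :=
  sSup {e : ℕ∞ | ∃ S : Finset U, e = (S.card : ℕ∞) ∧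
    (⋂₀ {Lang ∈ C | (S : Set U) ⊆ Lang}).Finite}

/-!
Two sets `Sd d` of the same language pair `E ∪ Sd d`, `O ∪ Sd d` already pin the intersection
down to the finite set `Sd d`, and these sets are arbitrarily large, so the closure dimension is
infinite. Generation is nevertheless easy: a single membership query of `-2` reveals whether `K`
contains the negative evens or the negative odds, and a negative number of that parity whose
absolute value exceeds every input seen so far is a fresh element of `K`.
-/

theorem closureDim_eq_top_of_forall_exists {U : Type} {C : Set (Set U)}
    (h : ∀ n : ℕ, ∃ S : Finset U, n ≤ S.card ∧ (⋂₀ {Lang ∈ C | (S : Set U) ⊆ Lang}).Finite) :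
    closureDim C = ⊤ := by
  refine eq_top_iff.2 (ENat.forall_natCast_le_iff_le.1 fun n _ => ?_)
  obtain ⟨S, hn, hfin⟩ := h n
  exact le_sSup_of_le ⟨S, rfl, hfin⟩ (by exact_mod_cast hn)

theorem closureDim_range_union_eq_top {U : Type} {E O : Set U} (hEO : Disjoint E O)
    (Sd : ℕ → Set U) (hfin : ∀ d, (Sd d).Finite) (hmono : StrictMono fun d => (Sd d).ncard) :
    closureDim ((Set.range fun d => E ∪ Sd d) ∪ (Set.range fun d => O ∪ Sd d)) = ⊤ := by
  refine closureDim_eq_top_of_forall_exists fun n => ⟨(hfin n).toFinset, ?_, ?_⟩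
  · rw [← Set.ncard_eq_toFinset_card _ (hfin n)]
    exact hmono.le_apply
  · rw [Set.Finite.coe_toFinset]
    have hinter : (E ∪ Sd n) ∩ (O ∪ Sd n) = Sd n := by
      rw [← Set.inter_union_distrib_right, hEO.inter_eq, Set.empty_union]
    refine (hfin n).subset (Set.Subset.trans ?_ hinter.subset)
    exact Set.subset_inter (Set.sInter_subset_of_mem ⟨Or.inl ⟨n, rfl⟩, Set.subset_union_right⟩)
      (Set.sInter_subset_of_mem ⟨Or.inr ⟨n, rfl⟩, Set.subset_union_right⟩)

theorem map_fst_fRun {U : Type} (Adv : FAdv U) (Gen : FGen U) (t : ℕ) :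
    (fRun Adv Gen t).map Prod.fst = (List.range t).map (fX Adv Gen) := by
  induction t with
  | zero => rfl
  | succ t ih =>
    rw [fRun, List.map_append, ih, List.range_succ, List.map_append]
    rfl

def inputBound (h : List (ℤ × ℤ × Bool × ℤ)) (x : ℤ) : ℕ :=
  ((x :: h.map Prod.fst).map Int.natAbs).sum

theorem natAbs_fX_le_inputBound (Adv : FAdv ℤ) (Gen : FGen ℤ) {s t : ℕ} (hst : s ≤ t) :
    (fX Adv Gen s).natAbs ≤ inputBound (fRun Adv Gen t) (fX Adv Gen t) := by
  refine List.single_le_sum (fun _ _ => Nat.zero_le _) _ (List.mem_map_of_mem ?_)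
  rw [map_fst_fRun, List.mem_cons, List.mem_map]
  rcases hst.lt_or_eq with hlt | rfl
  · exact Or.inr ⟨s, List.mem_range.2 hlt, rfl⟩
  · exact Or.inl rfl

def parityGen : FGen ℤ where
  query _ _ := -2
  out h x _ a := if a then -(2 * inputBound h x + 2) else -(2 * inputBound h x + 3)

section parityGen

variable {Adv : FAdv ℤ} {K : Set ℤ}

theorem fZ_parityGen_not_mem_fS (t : ℕ) : fZ Adv parityGen t ∉ fS Adv parityGen (t + 1) := by
  rintro ⟨s, hs, hxs⟩
  have hle := natAbs_fX_le_inputBound Adv parityGen (Nat.lt_succ_iff.1 hs)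
  rw [hxs] at hle
  change (if fA Adv parityGen t then _ else _ : ℤ).natAbs ≤ _ at hle
  split at hle <;> omega

theorem fZ_parityGen_mem_negEven (hK : fConsistent Adv parityGen K) (h2 : (-2 : ℤ) ∈ K)
    (t : ℕ) : fZ Adv parityGen t ∈ {n : ℤ | n < 0 ∧ Even n} := by
  have ha : fA Adv parityGen t = true := (hK.2.2 t).2 h2
  change (if fA Adv parityGen t then _ else _ : ℤ) ∈ _
  rw [if_pos ha]
  exact ⟨by omega, ⟨-(inputBound _ _ + 1 : ℤ), by ring⟩⟩

theorem fZ_parityGen_mem_negOdd (hK : fConsistent Adv parityGen K) (h2 : (-2 : ℤ) ∉ K)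
    (t : ℕ) : fZ Adv parityGen t ∈ {n : ℤ | n < 0 ∧ Odd n} := by
  have ha : fA Adv parityGen t = false := Bool.eq_false_iff.2 fun h => h2 ((hK.2.2 t).1 h)
  change (if fA Adv parityGen t then _ else _ : ℤ) ∈ _
  rw [if_neg (by simp [ha])]
  exact ⟨by omega, ⟨-(inputBound _ _ + 2 : ℤ), by ring⟩⟩

end parityGen

theorem uniformGenWithFeedback_negEven_negOdd (Sd : ℕ → Set ℤ)
    (hSd : ∀ d, Sd d ⊆ {n : ℤ | 0 ≤ n}) :
    UniformGenWithFeedback ((Set.range fun d => {n : ℤ | n < 0 ∧ Even n} ∪ Sd d) ∪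
        (Set.range fun d => {n : ℤ | n < 0 ∧ Odd n} ∪ Sd d)) := by
  refine ⟨parityGen, 0, fun K hK Adv hcons t _ => ⟨?_, fZ_parityGen_not_mem_fS t⟩⟩
  rcases hK with ⟨d, rfl⟩ | ⟨d, rfl⟩
  · exact Or.inl (fZ_parityGen_mem_negEven hcons (Or.inl ⟨by norm_num, ⟨-1, by norm_num⟩⟩) t)
  · refine Or.inl (fZ_parityGen_mem_negOdd hcons ?_ t)
    rintro (⟨_, hodd⟩ | hS)
    · exact Int.not_odd_iff_even.2 (by decide) hodd
    · exact absurd (hSd d hS) (by norm_num)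

theorem even_odd_partition_example_general
    (Sd : ℕ → Set ℤ)
    (hfin : ∀ d, (Sd d).Finite)
    (hunion : (⋃ d, Sd d) = {n : ℤ | 0 ≤ n})
    (hmono : StrictMono fun d => (Sd d).ncard) :
    closureDim ((Set.range fun d => {n : ℤ | n < 0 ∧ Even n} ∪ Sd d) ∪
        (Set.range fun d => {n : ℤ | n < 0 ∧ Odd n} ∪ Sd d)) = ⊤ ∧
    UniformGenWithFeedback ((Set.range fun d => {n : ℤ | n < 0 ∧ Even n} ∪ Sd d) ∪
        (Set.range fun d => {n : ℤ | n < 0 ∧ Odd n} ∪ Sd d)) := by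
  have hEO : Disjoint {n : ℤ | n < 0 ∧ Even n} {n : ℤ | n < 0 ∧ Odd n} :=
    Set.disjoint_left.2 fun _ he ho => Int.not_odd_iff_even.2 he.2 ho.2
  exact ⟨closureDim_range_union_eq_top hEO Sd hfin hmono,
    uniformGenWithFeedback_negEven_negOdd Sd fun d => hunion ▸ Set.subset_iUnion Sd d⟩

theorem even_odd_partition_example
    (Sd : ℕ → Set ℤ)
    (hfin : ∀ d, (Sd d).Finite)
    (hdisj : ∀ d e : ℕ, d ≠ e → Disjoint (Sd d) (Sd e))
    (hunion : (⋃ d, Sd d) = {n : ℤ | 0 ≤ n})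
    (hmono : StrictMono fun d => (Sd d).ncard) :
    closureDim ((Set.range fun d => {n : ℤ | n < 0 ∧ Even n} ∪ Sd d) ∪
        (Set.range fun d => {n : ℤ | n < 0 ∧ Odd n} ∪ Sd d)) = ⊤ ∧
    UniformGenWithFeedback ((Set.range fun d => {n : ℤ | n < 0 ∧ Even n} ∪ Sd d) ∪
        (Set.range fun d => {n : ℤ | n < 0 ∧ Odd n} ∪ Sd d)) :=
  even_odd_partition_example_general Sd hfin hunion hmono
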